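/- Let κ be a finite field with q elements and ψ a nontrivial additive character. Define the finite-field Pochhammer symbols (α)_ν = g(αν)/g(α) and (α)°_ν = g°(αν)/g°(α), where g°(φ) = q^{δ(φ)}g(φ). Then for any multiplicative characters α, ν: (α)_ν · (ᾱ)°_{ν̄} = ν(-1). -/
import Mathlib


open scoped BigOperators

namespace KdF

variable {κ : Type*} [Field κ] [Fintype κ] [DecidableEq κ]

noncomputable instance : Fintype (MulChar κ ℂ) := Fintype.ofFinite _

/-- The Gauss sum `g(φ) = -∑ φ(x) ψ(x)`. -/
noncomputable def g (ψ : AddChar κ ℂ) (φ : MulChar κ ℂ) : ℂ :=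
  -∑ x : κ, φ x * ψ x

/-- The variant `g°(φ) = q^{δ(φ)} g(φ)`. -/
noncomputable def gc (ψ : AddChar κ ℂ) (φ : MulChar κ ℂ) : ℂ :=
  (if φ = 1 then (Fintype.card κ : ℂ) else 1) * g ψ φ

/-- Finite-field Pochhammer symbol `(α)_ν = g(αν)/g(α)`. -/
noncomputable def poch (ψ : AddChar κ ℂ) (α ν : MulChar κ ℂ) : ℂ :=
  g ψ (α * ν) / g ψ α

/-- Variant Pochhammer symbol `(α)°_ν = g°(αν)/g°(α)`. -/
noncomputable def pochc (ψ : AddChar κ ℂ) (α ν : MulChar κ ℂ) : ℂ :=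
  gc ψ (α * ν) / gc ψ α

/-- `₁F₀(μ; x)` over the finite field `κ`. -/
noncomputable def F10 (ψ : AddChar κ ℂ) (μ : MulChar κ ℂ) (x : κ) : ℂ :=
  (1 / (1 - (Fintype.card κ : ℂ))) *
    ∑ ν : MulChar κ ℂ, poch ψ μ ν / pochc ψ 1 ν * ν x

/-- `₂F₁(α, β; γ; x)` over the finite field `κ`. -/
noncomputable def F21 (ψ : AddChar κ ℂ) (α β γ : MulChar κ ℂ) (x : κ) : ℂ :=
  (1 / (1 - (Fintype.card κ : ℂ))) *
    ∑ ν : MulChar κ ℂ,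
      poch ψ α ν * poch ψ β ν / (pochc ψ γ ν * pochc ψ 1 ν) * ν x

/-- `₃F₂(α, β, γ; φ, ρ; x)` over the finite field `κ`. -/
noncomputable def F32 (ψ : AddChar κ ℂ) (α β γ φ ρ : MulChar κ ℂ) (x : κ) : ℂ :=
  (1 / (1 - (Fintype.card κ : ℂ))) *
    ∑ ν : MulChar κ ℂ,
      poch ψ α ν * poch ψ β ν * poch ψ γ ν /
        (pochc ψ φ ν * pochc ψ ρ ν * pochc ψ 1 ν) * ν x

end KdF

open KdF

lemma g_one_eq {κ : Type*} [Field κ] [Fintype κ] [DecidableEq κ]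
    (ψ : AddChar κ ℂ) (hψ : ψ ≠ 1) : g ψ (1 : MulChar κ ℂ) = 1 := by
  have hsum : ∑ x : κ, ψ x = 0 := by
    rw [AddChar.sum_eq_zero_iff_ne_zero]
    rwa [← AddChar.one_eq_zero]
  have : ∑ x : κ, (1 : MulChar κ ℂ) x * ψ x = ∑ x : κ, ψ x - ψ 0 := by
    rw [Finset.sum_eq_sum_sdiff_singleton_add (Finset.mem_univ (0:κ))]
    rw [Finset.sum_eq_sum_sdiff_singleton_add (Finset.mem_univ (0:κ)) (fun x => ψ x)]
    simp only [MulChar.map_zero, zero_mul, add_zero]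
    rw [add_sub_cancel_right]
    refine Finset.sum_congr rfl fun x hx => ?_
    simp only [Finset.mem_sdiff, Finset.mem_singleton] at hx
    rw [MulChar.one_apply (isUnit_iff_ne_zero.mpr hx.2), one_mul]
  rw [g, this, hsum, zero_sub, AddChar.map_zero_eq_one, neg_neg]

lemma key_eq {κ : Type*} [Field κ] [Fintype κ] [DecidableEq κ]
    (ψ : AddChar κ ℂ) (hψ : ψ ≠ 1) (φ : MulChar κ ℂ) :
    g ψ φ * gc ψ φ⁻¹ = φ (-1) * (Fintype.card κ : ℂ) := by
  have hprim : ψ.IsPrimitive := AddChar.IsPrimitive.of_ne_one hψ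
  by_cases h : φ = 1
  · subst h
    rw [inv_one, gc, if_pos rfl, g_one_eq ψ hψ, MulChar.one_apply (isUnit_one.neg)]
    ring
  · have hinv : φ⁻¹ ≠ 1 := fun hc => h (by rw [← inv_inv φ, hc, inv_one])
    rw [gc, if_neg hinv, one_mul, g, g, neg_mul_neg]
    have h1 : gaussSum φ⁻¹ ψ = φ⁻¹ (-1) * gaussSum φ⁻¹ ψ⁻¹ := by
      rw [mul_gaussSum_inv_eq_gaussSum]
    have h2 : gaussSum φ ψ * gaussSum φ⁻¹ ψ⁻¹ = (Fintype.card κ : ℂ) :=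
      gaussSum_mul_gaussSum_eq_card h hprim
    have h3 : φ⁻¹ (-1) = φ (-1) := by
      have hu : IsUnit (-1 : κ) := isUnit_one.neg
      have := MulChar.inv_apply' φ (-1)
      rw [this]
      have hsq : φ (-1) * φ (-1) = 1 := by
        rw [← map_mul]; simp
      rw [inv_neg, inv_one]
    show gaussSum φ ψ * gaussSum φ⁻¹ ψ = φ (-1) * (Fintype.card κ : ℂ)
    rw [h1, h3, mul_left_comm, h2]


theorem stmt {κ : Type*} [Field κ] [Fintype κ] [DecidableEq κ]
    (ψ : AddChar κ ℂ) (hψ : ψ ≠ 1) (α ν : MulChar κ ℂ) :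
    poch ψ α ν * pochc ψ α⁻¹ ν⁻¹ = ν (-1) := by
  have hq : (Fintype.card κ : ℂ) ≠ 0 := Nat.cast_ne_zero.mpr Fintype.card_ne_zero
  have hsq : α (-1) * α (-1) = 1 := by rw [← map_mul]; norm_num
  have ha : α (-1) ≠ 0 := left_ne_zero_of_mul_eq_one hsq
  have k1 := key_eq ψ hψ (α * ν)
  have k2 := key_eq ψ hψ α
  have hg : g ψ α ≠ 0 := left_ne_zero_of_mul (b := gc ψ α⁻¹)
    (by rw [k2]; exact mul_ne_zero ha hq)
  have hgc : gc ψ α⁻¹ ≠ 0 := right_ne_zero_of_mul (a := g ψ α)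
    (by rw [k2]; exact mul_ne_zero ha hq)
  rw [poch, pochc, show α⁻¹ * ν⁻¹ = (α * ν)⁻¹ by rw [mul_inv]]
  rw [div_mul_div_comm, k1, div_eq_iff (mul_ne_zero hg hgc), k2, MulChar.mul_apply]
  ring
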